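/- Diagnosis by projection: let s and e be composable labelled transition systems that are mutually accepting, let i_s and i_e be input-enabled transition systems with I_{i_s} = I_s, U_{i_s} = U_s, I_{i_e} = I_e and U_{i_e} = U_e, and let σ ∈ Utraces(s ‖ e). If σ is a counterexample for i_s ‖ i_e uioco s ‖ e, then σ↾L_s^δ is a counterexample for i_s uioco s, or σ↾L_e^δ is a counterexample for i_e uioco e. -/

import Mathlib

/-- Visible labels extended with the quiescence label `δ`. -/
inductive DLabel (A : Type) where
  | act : A → DLabel A
  | δ : DLabel A
deriving DecidableEq

/-- A labelled transition system with state type `S` and label type `A`.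
`T p none p'` is an internal (τ) transition; `T p (some a) p'` a visible one.
The set of states is the whole type `S`; the initial state is `q0`. -/
structure LTS (S : Type) (A : Type) where
  T : S → Option A → S → Prop
  I : Set A
  U : Set A
  q0 : S

namespace LTS

variable {S E F A : Type}

/-- The set of visible labels. -/
def L (s : LTS S A) : Set A := s.I ∪ s.U

/-- Well-formedness of an LTS: countably many states and labels, inputs and
outputs disjoint, and visible transitions labelled in `I ∪ U`. -/
def WF (s : LTS S A) : Prop :=
  Countable S ∧ s.I.Countable ∧ s.U.Countable ∧ Disjoint s.I s.U ∧
    ∀ p a q, s.T p (some a) q → a ∈ s.L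

/-- A state is quiescent if it has no output transitions and no τ-transitions. -/
def quiescent (s : LTS S A) (p : S) : Prop :=
  (∀ x ∈ s.U, ∀ p', ¬ s.T p (some x) p') ∧ (∀ p', ¬ s.T p none p')

/-- Single-step transition relation for δ-extended labels: `δ` is a self-loop
on quiescent states. -/
def dstep (s : LTS S A) (p : S) : DLabel A → S → Prop
  | .act a, p' => s.T p (some a) p'
  | .δ, p' => p = p' ∧ s.quiescent p

/-- `eps p p'`: `p'` is reachable from `p` by finitely many τ-transitions. -/
def eps (s : LTS S A) : S → S → Prop :=
  Relation.ReflTransGen (fun p q => s.T p none q)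

/-- Weak transition relation `p ⟹σ p'` over δ-extended traces. -/
def wtrans (s : LTS S A) : S → List (DLabel A) → S → Prop
  | p, [], p' => s.eps p p'
  | p, ℓ :: σ, p'' => ∃ p1 p2, s.eps p p1 ∧ s.dstep p1 ℓ p2 ∧ s.wtrans p2 σ p''

/-- The δ-extended label set `L^δ` as a set of `DLabel`s. -/
def Ld (s : LTS S A) : Set (DLabel A) := (DLabel.act '' s.L) ∪ {DLabel.δ}

/-- `Utraces s`: δ-extended traces of `s` (from the initial state) that never
pass through a state refusing a subsequent input of the trace. -/
def Utraces (s : LTS S A) : Set (List (DLabel A)) :=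
  { σ | (∀ ℓ ∈ σ, ℓ ∈ s.Ld) ∧ (∃ p, s.wtrans s.q0 σ p) ∧
      ∀ σ1 a σ2, σ = σ1 ++ DLabel.act a :: σ2 → a ∈ s.I →
        ∀ p, s.wtrans s.q0 σ1 p → ∃ p', s.wtrans p [DLabel.act a] p' }

/-- `out p`: the outputs (including quiescence δ) enabled in state `p`. -/
def out (s : LTS S A) (p : S) : Set (DLabel A) :=
  { x | match x with
        | .act a => a ∈ s.U ∧ ∃ p', s.T p (some a) p'
        | .δ => s.quiescent p }

/-- `out` of a set of states. -/
def outSet (s : LTS S A) (P : Set S) : Set (DLabel A) := ⋃ p ∈ P, s.out p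

/-- `inp p`: the inputs weakly enabled in state `p`. -/
def inp (s : LTS S A) (p : S) : Set A :=
  { a | a ∈ s.I ∧ ∃ p', s.wtrans p [DLabel.act a] p' }

/-- The states reached from the initial state after trace `σ`. -/
def after (s : LTS S A) (σ : List (DLabel A)) : Set S :=
  { p' | s.wtrans s.q0 σ p' }

/-- Input-enabledness: every input is weakly enabled in every state. -/
def IOTS (s : LTS S A) : Prop :=
  ∀ q : S, ∀ a ∈ s.I, ∃ q', s.wtrans q [DLabel.act a] q'

/-- Two LTSs are composable iff their output sets are disjoint. -/
def Composable (s : LTS S A) (e : LTS E A) : Prop := Disjoint s.U e.U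

/-- Parallel composition of two LTSs: synchronisation on shared labels,
interleaving on non-shared labels and τ. -/
def par (s : LTS S A) (e : LTS E A) : LTS (S × E) A where
  I := (s.I \ e.U) ∪ (e.I \ s.U)
  U := s.U ∪ e.U
  q0 := (s.q0, e.q0)
  T := fun x ℓ y =>
    (s.T x.1 ℓ y.1 ∧ y.2 = x.2 ∧ (ℓ = none ∨ ∃ a ∈ s.L, ℓ = some a) ∧
      ∀ a ∈ e.L, ℓ ≠ some a) ∨
    (e.T x.2 ℓ y.2 ∧ y.1 = x.1 ∧ (ℓ = none ∨ ∃ a ∈ e.L, ℓ = some a) ∧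
      ∀ a ∈ s.L, ℓ ≠ some a) ∨
    (∃ a ∈ s.L ∩ e.L, ℓ = some a ∧ s.T x.1 (some a) y.1 ∧ e.T x.2 (some a) y.2)

/-- The uioco implementation relation. -/
def uioco (i : LTS E A) (s : LTS S A) : Prop :=
  ∀ σ ∈ s.Utraces, i.outSet (i.after σ) ⊆ s.outSet (s.after σ)

/-- `s.Accepts e`: along every Utrace of `s ‖ e`, every output of `e` that is an
input label of `s` is actually accepted by `s` and is an output of `e`. -/
def Accepts (s : LTS S A) (e : LTS E A) : Prop :=
  ∀ σ ∈ (s.par e).Utraces, ∀ p q, (s.par e).wtrans (s.par e).q0 σ (p, q) →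
    ∀ a, DLabel.act a ∈ e.out q → a ∈ s.I → a ∈ s.inp p ∧ a ∈ e.U

/-- Mutual acceptance. -/
def MutuallyAccepts (s : LTS S A) (e : LTS E A) : Prop := s.Accepts e ∧ e.Accepts s

/-- Isomorphism of LTSs: equal label sets and a bijection on states preserving
the initial state and all transitions (including τ and δ). -/
def Isomorphic (s : LTS S A) (s' : LTS E A) : Prop :=
  s.I = s'.I ∧ s.U = s'.U ∧ ∃ f : S ≃ E, f s.q0 = s'.q0 ∧
    (∀ p p' ℓ, s.T p ℓ p' ↔ s'.T (f p) ℓ (f p')) ∧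
    (∀ p p', s.dstep p DLabel.δ p' ↔ s'.dstep (f p) DLabel.δ (f p'))

open Classical in
/-- Projection of a trace onto a set of labels. -/
noncomputable def proj : List (DLabel A) → Set (DLabel A) → List (DLabel A)
  | [], _ => []
  | ℓ :: σ, 𝓛 => if ℓ ∈ 𝓛 then ℓ :: proj σ 𝓛 else proj σ 𝓛

end LTS

/-- A trace `σ` is a counterexample for `i uioco s`. -/
def LTS.Counterexample {S E A : Type} (σ : List (DLabel A))
    (i : LTS E A) (s : LTS S A) : Prop :=
  σ ∈ s.Utraces ∧ ¬ i.outSet (i.after σ) ⊆ s.outSet (s.after σ)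

/-!
A run of `s ‖ e` along `σ` projects to runs of `s` and `e` along `σ↾L_s^δ` and `σ↾L_e^δ`, and
conversely such component runs zip into a run of `s ‖ e` along `σ`. Projecting is the delicate
direction because of `δ`: a quiescent composite state needs quiescent components, which can only
fail if one component has an output that the partner refuses to synchronise on. Input-enabledness
rules this out for `i_s ‖ i_e`, and mutual acceptance rules it out along the Utraces of `s ‖ e`;
mutual acceptance also makes both projections Utraces. So if neither projection were a
counterexample, an output of `i_s ‖ i_e` after `σ` (a `δ` of both components, or an output of one
of them) would be an output of the specifications after the projections, and zipping their runs
back, with the partner accepting a shared output, shows that it is an output of `s ‖ e` after `σ`.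
-/

namespace LTS

variable {S E A : Type} {s : LTS S A} {e : LTS E A}

theorem eps_trans {p q r : S} (h₁ : s.eps p q) (h₂ : s.eps q r) : s.eps p r :=
  Relation.ReflTransGen.trans h₁ h₂

theorem eps_eq_of_forall_not_tau {p q : S} (hp : ∀ p', ¬ s.T p none p') (h : s.eps p q) :
    q = p := by
  rcases Relation.ReflTransGen.cases_head h with h | ⟨p', hp', -⟩
  · exact h.symm
  · exact absurd hp' (hp p')

theorem wtrans_of_eps_of_wtrans {σ : List (DLabel A)} {p q r : S} (h₁ : s.eps p q)
    (h : s.wtrans q σ r) : s.wtrans p σ r := by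
  cases σ with
  | nil => exact eps_trans h₁ h
  | cons ℓ σ =>
    obtain ⟨q₁, q₂, hq₁, hstep, hrest⟩ := h
    exact ⟨q₁, q₂, eps_trans h₁ hq₁, hstep, hrest⟩

theorem wtrans_of_wtrans_of_eps {σ : List (DLabel A)} {p q r : S} (h : s.wtrans p σ q)
    (h₂ : s.eps q r) : s.wtrans p σ r := by
  induction σ generalizing p with
  | nil => exact eps_trans h h₂
  | cons ℓ σ ih =>
    obtain ⟨p₁, p₂, hp₁, hstep, hrest⟩ := h
    exact ⟨p₁, p₂, hp₁, hstep, ih hrest⟩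

theorem exists_wtrans_of_wtrans_append {σ₁ σ₂ : List (DLabel A)} {p r : S}
    (h : s.wtrans p (σ₁ ++ σ₂) r) : ∃ q, s.wtrans p σ₁ q ∧ s.wtrans q σ₂ r := by
  induction σ₁ generalizing p with
  | nil => exact ⟨p, .refl, h⟩
  | cons ℓ σ₁ ih =>
    obtain ⟨p₁, p₂, hp₁, hstep, hrest⟩ := h
    obtain ⟨q, hq, hqr⟩ := ih hrest
    exact ⟨q, ⟨p₁, p₂, hp₁, hstep, hq⟩, hqr⟩

theorem Utraces_of_prefix {σ₁ σ : List (DLabel A)} (h : σ₁ <+: σ) (hσ : σ ∈ s.Utraces) :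
    σ₁ ∈ s.Utraces := by
  obtain ⟨σ₂, rfl⟩ := h
  obtain ⟨hlab, ⟨p, hp⟩, hin⟩ := hσ
  refine ⟨fun ℓ hℓ => hlab ℓ (List.mem_append_left _ hℓ), ?_, ?_⟩
  · obtain ⟨q, hq, -⟩ := exists_wtrans_of_wtrans_append hp
    exact ⟨q, hq⟩
  · rintro τ₁ a τ₂ rfl
    exact hin τ₁ a (τ₂ ++ σ₂) (by simp)

theorem mem_I_of_mem_L {a : A} (h : a ∈ s.L) (hU : a ∉ s.U) : a ∈ s.I :=
  h.resolve_right hU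

theorem act_mem_Ld {a : A} : DLabel.act a ∈ s.Ld ↔ a ∈ s.L := by
  simp [Ld]

theorem δ_mem_Ld (s : LTS S A) : DLabel.δ ∈ s.Ld := by
  simp [Ld]

theorem mem_outSet_iff {ℓ : DLabel A} {P : Set S} : ℓ ∈ s.outSet P ↔ ∃ p ∈ P, ℓ ∈ s.out p := by
  simp [outSet]

theorem Composable.symm (hc : Composable s e) : Composable e s :=
  Disjoint.symm hc

theorem MutuallyAccepts.symm (hma : s.MutuallyAccepts e) : e.MutuallyAccepts s :=
  ⟨hma.2, hma.1⟩

section Projection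

variable {σ σ₁ σ₂ : List (DLabel A)} {𝓛 : Set (DLabel A)} {ℓ : DLabel A}

theorem proj_cons_of_mem (h : ℓ ∈ 𝓛) : proj (ℓ :: σ) 𝓛 = ℓ :: proj σ 𝓛 := by
  rw [proj, if_pos h]

theorem proj_cons_of_not_mem (h : ℓ ∉ 𝓛) : proj (ℓ :: σ) 𝓛 = proj σ 𝓛 := by
  rw [proj, if_neg h]

theorem mem_of_mem_proj (h : ℓ ∈ proj σ 𝓛) : ℓ ∈ 𝓛 := by
  induction σ with
  | nil => simp [proj] at h
  | cons ℓ' σ ih =>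
    by_cases h' : ℓ' ∈ 𝓛
    · rw [proj_cons_of_mem h', List.mem_cons] at h
      exact h.elim (· ▸ h') ih
    · exact ih (proj_cons_of_not_mem h' ▸ h)

theorem exists_eq_append_of_proj_eq_append (h : proj σ 𝓛 = σ₁ ++ ℓ :: σ₂) :
    ∃ τ₁ τ₂, σ = τ₁ ++ ℓ :: τ₂ ∧ proj τ₁ 𝓛 = σ₁ ∧ proj τ₂ 𝓛 = σ₂ := by
  induction σ generalizing σ₁ with
  | nil => simp [proj] at h
  | cons ℓ' σ ih =>
    by_cases h' : ℓ' ∈ 𝓛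
    · rw [proj_cons_of_mem h'] at h
      cases σ₁ <;> simp only [List.nil_append, List.cons_append, List.cons.injEq] at h
      case nil =>
        obtain ⟨rfl, h⟩ := h
        exact ⟨[], σ, rfl, by simp [proj], h⟩
      case cons ℓ'' σ₁ =>
        obtain ⟨rfl, h⟩ := h
        obtain ⟨τ₁, τ₂, rfl, rfl, rfl⟩ := ih h
        exact ⟨ℓ' :: τ₁, τ₂, rfl, proj_cons_of_mem h', rfl⟩
    · rw [proj_cons_of_not_mem h'] at h
      obtain ⟨τ₁, τ₂, rfl, rfl, rfl⟩ := ih h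
      exact ⟨ℓ' :: τ₁, τ₂, rfl, proj_cons_of_not_mem h', rfl⟩

end Projection

section Parallel

variable {x y : S × E} {p p' : S} {q q' : E} {a : A}

theorem par_L (s : LTS S A) (e : LTS E A) : (s.par e).L = s.L ∪ e.L := by
  ext a
  simp only [L, par, Set.mem_union, Set.mem_sdiff]
  tauto

theorem par_T_left (h : s.T p (some a) p') (ha : a ∈ s.L) (hae : a ∉ e.L) :
    (s.par e).T (p, q) (some a) (p', q) :=
  Or.inl ⟨h, rfl, Or.inr ⟨a, ha, rfl⟩, fun _ hb hab => hae (Option.some.inj hab ▸ hb)⟩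

theorem par_T_sync (hs : s.T p (some a) p') (he : e.T q (some a) q') (has : a ∈ s.L)
    (hae : a ∈ e.L) : (s.par e).T (p, q) (some a) (p', q') :=
  Or.inr (Or.inr ⟨a, ⟨has, hae⟩, rfl, hs, he⟩)

theorem par_T_tau_left (h : s.T p none p') : (s.par e).T (p, q) none (p', q) :=
  Or.inl ⟨h, rfl, Or.inl rfl, fun _ _ => nofun⟩

theorem par_tau (h : (s.par e).T x none y) :
    (s.T x.1 none y.1 ∧ y.2 = x.2) ∨ (e.T x.2 none y.2 ∧ y.1 = x.1) := by
  rcases h with ⟨h₁, h₂, -⟩ | ⟨h₁, h₂, -⟩ | ⟨_, _, h, -⟩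
  · exact .inl ⟨h₁, h₂⟩
  · exact .inr ⟨h₁, h₂⟩
  · cases h

theorem par_T_fst (h : (s.par e).T x (some a) y) (ha : a ∈ s.L) : s.T x.1 (some a) y.1 := by
  rcases h with ⟨h, -⟩ | ⟨-, -, -, hne⟩ | ⟨b, -, hb, h, -⟩
  · exact h
  · exact absurd rfl (hne a ha)
  · cases hb
    exact h

theorem par_T_fst_eq_of_not_mem (h : (s.par e).T x (some a) y) (ha : a ∉ s.L) : y.1 = x.1 := by
  rcases h with ⟨-, -, h | ⟨b, hb, hab⟩, -⟩ | ⟨-, h, -⟩ | ⟨b, hb, hab, -⟩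
  · cases h
  · cases hab
    exact absurd hb ha
  · exact h
  · cases hab
    exact absurd hb.1 ha

theorem par_eps_left (q : E) (h : s.eps p p') : (s.par e).eps (p, q) (p', q) := by
  induction h with
  | refl => exact .refl
  | tail _ hstep ih => exact ih.tail (par_T_tau_left hstep)

theorem par_eps_fst (h : (s.par e).eps x y) : s.eps x.1 y.1 := by
  induction h with
  | refl => exact .refl
  | tail _ hstep ih =>
    rcases par_tau hstep with ⟨h, -⟩ | ⟨-, h⟩
    · exact ih.tail h
    · exact h ▸ ih

theorem par_quiescent_tau_fst (h : (s.par e).quiescent x) : ∀ p', ¬ s.T x.1 none p' :=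
  fun _ hp' => h.2 _ (par_T_tau_left hp')

theorem par_T_swap {ℓ : Option A} (h : (s.par e).T x ℓ y) : (e.par s).T x.swap ℓ y.swap := by
  rcases h with ⟨h₁, h₂, h₃, h₄⟩ | ⟨h₁, h₂, h₃, h₄⟩ | ⟨a, ⟨ha₁, ha₂⟩, h₃, h₄, h₅⟩
  · exact .inr (.inl ⟨h₁, h₂, h₃, h₄⟩)
  · exact .inl ⟨h₁, h₂, h₃, h₄⟩
  · exact .inr (.inr ⟨a, ⟨ha₂, ha₁⟩, h₃, h₅, h₄⟩)

theorem par_quiescent_swap (h : (s.par e).quiescent x) : (e.par s).quiescent x.swap :=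
  ⟨fun _ ha y hy => h.1 _ (Or.symm ha) y.swap (par_T_swap hy),
    fun y hy => h.2 y.swap (par_T_swap hy)⟩

theorem par_out_swap {ℓ : DLabel A} (h : ℓ ∈ (s.par e).out x) : ℓ ∈ (e.par s).out x.swap := by
  cases ℓ with
  | act a =>
    obtain ⟨ha, y, hy⟩ := h
    exact ⟨Or.symm ha, y.swap, par_T_swap hy⟩
  | δ => exact par_quiescent_swap h

theorem par_eps_swap (h : (s.par e).eps x y) : (e.par s).eps x.swap y.swap := by
  induction h with
  | refl => exact .refl
  | tail _ hstep ih => exact ih.tail (par_T_swap hstep)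

theorem par_wtrans_swap {σ : List (DLabel A)} (h : (s.par e).wtrans x σ y) :
    (e.par s).wtrans x.swap σ y.swap := by
  induction σ generalizing x with
  | nil => exact par_eps_swap h
  | cons ℓ σ ih =>
    obtain ⟨x₁, x₂, hx₁, hstep, hrest⟩ := h
    refine ⟨x₁.swap, x₂.swap, par_eps_swap hx₁, ?_, ih hrest⟩
    cases ℓ with
    | act a => exact par_T_swap hstep
    | δ => exact ⟨congrArg Prod.swap hstep.1, par_quiescent_swap hstep.2⟩

theorem par_Ld_comm (s : LTS S A) (e : LTS E A) : (s.par e).Ld = (e.par s).Ld := by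
  rw [Ld, Ld, par_L, par_L, Set.union_comm s.L]

theorem par_Utraces_swap {σ : List (DLabel A)} (h : σ ∈ (s.par e).Utraces) :
    σ ∈ (e.par s).Utraces := by
  obtain ⟨hlab, ⟨x, hx⟩, hin⟩ := h
  refine ⟨fun ℓ hℓ => par_Ld_comm s e ▸ hlab ℓ hℓ, ⟨x.swap, par_wtrans_swap hx⟩, ?_⟩
  intro σ₁ a σ₂ hσ ha y hy
  obtain ⟨y', hy'⟩ := hin σ₁ a σ₂ hσ (Or.symm ha) y.swap (par_wtrans_swap hy)
  exact ⟨y'.swap, par_wtrans_swap hy'⟩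

theorem par_outSet_after_swap {σ : List (DLabel A)} {ℓ : DLabel A}
    (h : ℓ ∈ (s.par e).outSet ((s.par e).after σ)) :
    ℓ ∈ (e.par s).outSet ((e.par s).after σ) := by
  obtain ⟨x, hx, hℓ⟩ := mem_outSet_iff.mp h
  exact mem_outSet_iff.mpr ⟨x.swap, par_wtrans_swap hx, par_out_swap hℓ⟩

theorem par_T_right (h : e.T q (some a) q') (hae : a ∈ e.L) (has : a ∉ s.L) :
    (s.par e).T (p, q) (some a) (p, q') :=
  par_T_swap (par_T_left h hae has)

theorem par_T_snd (h : (s.par e).T x (some a) y) (ha : a ∈ e.L) : e.T x.2 (some a) y.2 :=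
  par_T_fst (par_T_swap h) ha

theorem par_eps_right (p : S) (h : e.eps q q') : (s.par e).eps (p, q) (p, q') :=
  par_eps_swap (par_eps_left p h)

theorem par_eps_snd (h : (s.par e).eps x y) : e.eps x.2 y.2 :=
  par_eps_fst (par_eps_swap h)

theorem par_quiescent_tau_snd (h : (s.par e).quiescent x) : ∀ q', ¬ e.T x.2 none q' :=
  par_quiescent_tau_fst (par_quiescent_swap h)

theorem quiescent_par (hp : s.quiescent p) (hq : e.quiescent q) :
    (s.par e).quiescent (p, q) := by
  refine ⟨fun a ha y hy => ?_, fun y hy => ?_⟩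
  · rcases ha with ha | ha
    · exact hp.1 a ha _ (par_T_fst hy (.inr ha))
    · exact hq.1 a ha _ (par_T_snd hy (.inr ha))
  · rcases par_tau hy with ⟨h, -⟩ | ⟨h, -⟩
    · exact hp.2 _ h
    · exact hq.2 _ h

theorem act_mem_out_or_of_mem_par_out (h : DLabel.act a ∈ (s.par e).out x) :
    DLabel.act a ∈ s.out x.1 ∨ DLabel.act a ∈ e.out x.2 := by
  obtain ⟨ha | ha, y, hy⟩ := h
  · exact .inl ⟨ha, y.1, par_T_fst hy (.inr ha)⟩
  · exact .inr ⟨ha, y.2, par_T_snd hy (.inr ha)⟩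

theorem exists_eps_act_mem_par_out (hu : DLabel.act a ∈ s.out p)
    (hq : a ∈ e.L → ∃ q', e.wtrans q [.act a] q') :
    ∃ q₁, e.eps q q₁ ∧ DLabel.act a ∈ (s.par e).out (p, q₁) := by
  obtain ⟨haU, p', hp'⟩ := hu
  by_cases hae : a ∈ e.L
  · obtain ⟨-, q₁, q₂, hq₁, hstep, -⟩ := hq hae
    exact ⟨q₁, hq₁, .inl haU, (p', q₂), par_T_sync hp' hstep (.inr haU) hae⟩
  · exact ⟨q, .refl, .inl haU, (p', q), par_T_left hp' (.inr haU) hae⟩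

theorem quiescent_fst_of_par (h : (s.par e).quiescent x)
    (hq : ∀ a, DLabel.act a ∈ s.out x.1 → a ∈ e.L → ∃ q', e.wtrans x.2 [.act a] q') :
    s.quiescent x.1 := by
  refine ⟨fun a ha p' hp' => ?_, par_quiescent_tau_fst h⟩
  have hout : DLabel.act a ∈ s.out x.1 := ⟨ha, p', hp'⟩
  obtain ⟨q₁, hq₁, -, y, hy⟩ := exists_eps_act_mem_par_out hout (hq a hout)
  rw [eps_eq_of_forall_not_tau (par_quiescent_tau_snd h) hq₁] at hy
  exact h.1 a (.inl ha) y hy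

theorem quiescent_snd_of_par (h : (s.par e).quiescent x)
    (hp : ∀ a, DLabel.act a ∈ e.out x.2 → a ∈ s.L → ∃ p', s.wtrans x.1 [.act a] p') :
    e.quiescent x.2 :=
  quiescent_fst_of_par (par_quiescent_swap h) hp

theorem quiescent_of_quiescent_par_of_IOTS (hd : Disjoint s.U e.U) (hs : s.IOTS)
    (he : e.IOTS) (h : (s.par e).quiescent x) : s.quiescent x.1 ∧ e.quiescent x.2 :=
  ⟨quiescent_fst_of_par h fun a ha hae =>
      he x.2 a (mem_I_of_mem_L hae (Set.disjoint_left.mp hd ha.1)),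
    quiescent_snd_of_par h fun a ha has =>
      hs x.1 a (mem_I_of_mem_L has (Set.disjoint_right.mp hd ha.1))⟩

end Parallel

section Runs

variable {σ : List (DLabel A)} {x z : S × E}

theorem wtrans_par_of_wtrans_proj {p p' : S} {q q' : E} (hσ : ∀ ℓ ∈ σ, ℓ ∈ (s.par e).Ld)
    (hs : s.wtrans p (proj σ s.Ld) p') (he : e.wtrans q (proj σ e.Ld) q') :
    (s.par e).wtrans (p, q) σ (p', q') := by
  induction σ generalizing p q with
  | nil => exact eps_trans (par_eps_left q hs) (par_eps_right p' he)
  | cons ℓ σ ih =>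
    have hσ' : ∀ ℓ ∈ σ, ℓ ∈ (s.par e).Ld := fun ℓ hℓ => hσ ℓ (List.mem_cons_of_mem _ hℓ)
    cases ℓ with
    | δ =>
      rw [proj_cons_of_mem (δ_mem_Ld s)] at hs
      rw [proj_cons_of_mem (δ_mem_Ld e)] at he
      obtain ⟨p₁, _, hp₁, ⟨rfl, hqp⟩, hs⟩ := hs
      obtain ⟨q₁, _, hq₁, ⟨rfl, hqq⟩, he⟩ := he
      exact ⟨(p₁, q₁), (p₁, q₁), eps_trans (par_eps_left q hp₁) (par_eps_right p₁ hq₁),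
        ⟨rfl, quiescent_par hqp hqq⟩, ih hσ' hs he⟩
    | act a =>
      have ha : a ∈ s.L ∪ e.L := par_L s e ▸ act_mem_Ld.mp (hσ _ List.mem_cons_self)
      by_cases has : a ∈ s.L <;> by_cases hae : a ∈ e.L
      · rw [proj_cons_of_mem (act_mem_Ld.mpr has)] at hs
        rw [proj_cons_of_mem (act_mem_Ld.mpr hae)] at he
        obtain ⟨p₁, p₂, hp₁, hsT, hs⟩ := hs
        obtain ⟨q₁, q₂, hq₁, heT, he⟩ := he
        exact ⟨(p₁, q₁), (p₂, q₂), eps_trans (par_eps_left q hp₁) (par_eps_right p₁ hq₁),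
          par_T_sync hsT heT has hae, ih hσ' hs he⟩
      · rw [proj_cons_of_mem (act_mem_Ld.mpr has)] at hs
        rw [proj_cons_of_not_mem (mt act_mem_Ld.mp hae)] at he
        obtain ⟨p₁, p₂, hp₁, hsT, hs⟩ := hs
        exact ⟨(p₁, q), (p₂, q), par_eps_left q hp₁, par_T_left hsT has hae, ih hσ' hs he⟩
      · rw [proj_cons_of_not_mem (mt act_mem_Ld.mp has)] at hs
        rw [proj_cons_of_mem (act_mem_Ld.mpr hae)] at he
        obtain ⟨q₁, q₂, hq₁, heT, he⟩ := he
        exact ⟨(p, q₁), (p, q₂), par_eps_right p hq₁, par_T_right heT hae has, ih hσ' hs he⟩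
      · exact ha.elim (absurd · has) (absurd · hae)

theorem wtrans_proj_fst (h : (s.par e).wtrans x σ z)
    (hδ : ∀ σ₁, σ₁ <+: σ → ∀ y, (s.par e).wtrans x σ₁ y → (s.par e).quiescent y → s.quiescent y.1) :
    s.wtrans x.1 (proj σ s.Ld) z.1 := by
  induction σ generalizing x with
  | nil => exact par_eps_fst h
  | cons ℓ σ ih =>
    obtain ⟨x₁, x₂, hx₁, hstep, hrest⟩ := h
    have ih := ih hrest fun σ₁ h₁ y hy hq =>
      hδ (ℓ :: σ₁) (List.cons_prefix_cons.mpr ⟨rfl, h₁⟩) y ⟨x₁, x₂, hx₁, hstep, hy⟩ hq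
    cases ℓ with
    | δ =>
      obtain ⟨rfl, hq⟩ := hstep
      rw [proj_cons_of_mem (δ_mem_Ld s)]
      exact ⟨x₁.1, x₁.1, par_eps_fst hx₁, ⟨rfl, hδ [] List.nil_prefix x₁ hx₁ hq⟩, ih⟩
    | act a =>
      by_cases ha : a ∈ s.L
      · rw [proj_cons_of_mem (act_mem_Ld.mpr ha)]
        exact ⟨x₁.1, x₂.1, par_eps_fst hx₁, par_T_fst hstep ha, ih⟩
      · rw [proj_cons_of_not_mem (mt act_mem_Ld.mp ha)]
        rw [par_T_fst_eq_of_not_mem hstep ha] at ih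
        exact wtrans_of_eps_of_wtrans (par_eps_fst hx₁) ih

theorem wtrans_proj (h : (s.par e).wtrans x σ z)
    (hδ : ∀ σ₁, σ₁ <+: σ → ∀ y, (s.par e).wtrans x σ₁ y → (s.par e).quiescent y →
      s.quiescent y.1 ∧ e.quiescent y.2) :
    s.wtrans x.1 (proj σ s.Ld) z.1 ∧ e.wtrans x.2 (proj σ e.Ld) z.2 :=
  ⟨wtrans_proj_fst h fun σ₁ h₁ y hy hq => (hδ σ₁ h₁ y hy hq).1,
    wtrans_proj_fst (par_wtrans_swap h) fun σ₁ h₁ y hy hq =>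
      (hδ σ₁ h₁ y.swap (par_wtrans_swap hy) (par_quiescent_swap hq)).2⟩

theorem wtrans_act_fst {a : A} (h : (s.par e).wtrans x [.act a] z) (ha : a ∈ s.L) :
    s.wtrans x.1 [.act a] z.1 := by
  obtain ⟨x₁, x₂, hx₁, hstep, hx₂⟩ := h
  exact ⟨x₁.1, x₂.1, par_eps_fst hx₁, par_T_fst hstep ha, par_eps_fst hx₂⟩

end Runs

section Acceptance

variable {σ : List (DLabel A)}

theorem Accepts.exists_wtrans (hacc : s.Accepts e) (hc : Composable s e)
    (hσ : σ ∈ (s.par e).Utraces) {p : S} {q : E} {a : A}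
    (hw : (s.par e).wtrans (s.par e).q0 σ (p, q)) (ha : DLabel.act a ∈ e.out q)
    (has : a ∈ s.L) : ∃ p', s.wtrans p [.act a] p' :=
  (hacc σ hσ p q hw a ha (mem_I_of_mem_L has (Set.disjoint_right.mp hc ha.1))).1.2

theorem MutuallyAccepts.quiescent_of_quiescent_par (hma : s.MutuallyAccepts e)
    (hc : Composable s e) (hσ : σ ∈ (s.par e).Utraces) {x : S × E}
    (hw : (s.par e).wtrans (s.par e).q0 σ x) (h : (s.par e).quiescent x) :
    s.quiescent x.1 ∧ e.quiescent x.2 :=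
  ⟨quiescent_fst_of_par h fun _ ha hae =>
      hma.2.exists_wtrans hc.symm (par_Utraces_swap hσ) (par_wtrans_swap hw) ha hae,
    quiescent_snd_of_par h fun _ ha has => hma.1.exists_wtrans hc hσ hw ha has⟩

theorem MutuallyAccepts.wtrans_proj (hma : s.MutuallyAccepts e) (hc : Composable s e)
    (hσ : σ ∈ (s.par e).Utraces) {x : S × E} (hw : (s.par e).wtrans (s.par e).q0 σ x) :
    s.wtrans s.q0 (proj σ s.Ld) x.1 ∧ e.wtrans e.q0 (proj σ e.Ld) x.2 :=
  LTS.wtrans_proj hw fun _ h₁ _ hy hq =>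
    hma.quiescent_of_quiescent_par hc (Utraces_of_prefix h₁ hσ) hy hq

theorem MutuallyAccepts.proj_mem_Utraces (hma : s.MutuallyAccepts e) (hc : Composable s e)
    (hσ : σ ∈ (s.par e).Utraces) : proj σ s.Ld ∈ s.Utraces := by
  obtain ⟨z, hz⟩ := hσ.2.1
  refine ⟨fun ℓ hℓ => mem_of_mem_proj hℓ, ⟨z.1, (hma.wtrans_proj hc hσ hz).1⟩, ?_⟩
  intro σ₁ a σ₂ hsplit ha p hp
  obtain ⟨τ₁, τ₂, rfl, rfl, -⟩ := exists_eq_append_of_proj_eq_append hsplit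
  have hτ₁ : τ₁ ∈ (s.par e).Utraces := Utraces_of_prefix (List.prefix_append _ _) hσ
  obtain ⟨y, hy, y₁, y₂, hy₁, hstep, -⟩ := exists_wtrans_of_wtrans_append hz
  have hpy : (s.par e).wtrans (s.par e).q0 τ₁ (p, y.2) :=
    wtrans_par_of_wtrans_proj hτ₁.1 hp (hma.wtrans_proj hc hτ₁ hy).2
  by_cases haU : a ∈ e.U
  · have hpy₁ : (s.par e).wtrans (s.par e).q0 τ₁ (p, y₁.2) :=
      wtrans_of_wtrans_of_eps hpy (par_eps_right p (par_eps_snd hy₁))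
    exact hma.1.exists_wtrans hc hτ₁ hpy₁ ⟨haU, y₂.2, par_T_snd hstep (.inr haU)⟩ (.inl ha)
  · obtain ⟨z', hz'⟩ := hσ.2.2 τ₁ a τ₂ rfl (.inl ⟨ha, haU⟩) (p, y.2) hpy
    exact ⟨z'.1, wtrans_act_fst hz' (.inl ha)⟩

theorem δ_mem_outSet_after_par (hσ : ∀ ℓ ∈ σ, ℓ ∈ (s.par e).Ld)
    (hs : DLabel.δ ∈ s.outSet (s.after (proj σ s.Ld)))
    (he : DLabel.δ ∈ e.outSet (e.after (proj σ e.Ld))) :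
    DLabel.δ ∈ (s.par e).outSet ((s.par e).after σ) := by
  obtain ⟨p, hp, hpδ⟩ := mem_outSet_iff.mp hs
  obtain ⟨q, hq, hqδ⟩ := mem_outSet_iff.mp he
  exact mem_outSet_iff.mpr ⟨(p, q), wtrans_par_of_wtrans_proj hσ hp hq, quiescent_par hpδ hqδ⟩

theorem MutuallyAccepts.act_mem_outSet_after_par_of_fst (hma : s.MutuallyAccepts e)
    (hc : Composable s e) (hσ : σ ∈ (s.par e).Utraces) {a : A}
    (ha : DLabel.act a ∈ s.outSet (s.after (proj σ s.Ld))) :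
    DLabel.act a ∈ (s.par e).outSet ((s.par e).after σ) := by
  obtain ⟨p, hp, hpa⟩ := mem_outSet_iff.mp ha
  obtain ⟨z, hz⟩ := hσ.2.1
  have hpz : (s.par e).wtrans (s.par e).q0 σ (p, z.2) :=
    wtrans_par_of_wtrans_proj hσ.1 hp (hma.wtrans_proj hc hσ hz).2
  obtain ⟨q, hq, hout⟩ := exists_eps_act_mem_par_out hpa fun hae =>
    hma.2.exists_wtrans hc.symm (par_Utraces_swap hσ) (par_wtrans_swap hpz) hpa hae
  exact mem_outSet_iff.mpr ⟨(p, q), wtrans_of_wtrans_of_eps hpz (par_eps_right p hq), hout⟩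

theorem MutuallyAccepts.act_mem_outSet_after_par_of_snd (hma : s.MutuallyAccepts e)
    (hc : Composable s e) (hσ : σ ∈ (s.par e).Utraces) {a : A}
    (ha : DLabel.act a ∈ e.outSet (e.after (proj σ e.Ld))) :
    DLabel.act a ∈ (s.par e).outSet ((s.par e).after σ) :=
  par_outSet_after_swap
    (hma.symm.act_mem_outSet_after_par_of_fst hc.symm (par_Utraces_swap hσ) ha)

theorem MutuallyAccepts.outSet_after_par_subset {SI EI : Type} {iS : LTS SI A}
    {iE : LTS EI A} (hma : s.MutuallyAccepts e) (hc : Composable s e)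
    (hσ : σ ∈ (s.par e).Utraces) (hd : Disjoint iS.U iE.U) (hiS : iS.IOTS) (hiE : iE.IOTS)
    (hLs : iS.Ld = s.Ld) (hLe : iE.Ld = e.Ld)
    (hS : iS.outSet (iS.after (proj σ s.Ld)) ⊆ s.outSet (s.after (proj σ s.Ld)))
    (hE : iE.outSet (iE.after (proj σ e.Ld)) ⊆ e.outSet (e.after (proj σ e.Ld))) :
    (iS.par iE).outSet ((iS.par iE).after σ) ⊆ (s.par e).outSet ((s.par e).after σ) := by
  intro ℓ hℓ
  obtain ⟨y, hy, hℓy⟩ := mem_outSet_iff.mp hℓ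
  obtain ⟨hy₁, hy₂⟩ := LTS.wtrans_proj hy fun _ _ _ _ hq =>
    quiescent_of_quiescent_par_of_IOTS hd hiS hiE hq
  rw [hLs] at hy₁
  rw [hLe] at hy₂
  have hS' {ℓ} (h : ℓ ∈ iS.out y.1) := hS (mem_outSet_iff.mpr ⟨y.1, hy₁, h⟩)
  have hE' {ℓ} (h : ℓ ∈ iE.out y.2) := hE (mem_outSet_iff.mpr ⟨y.2, hy₂, h⟩)
  cases ℓ with
  | δ =>
    obtain ⟨hq₁, hq₂⟩ := quiescent_of_quiescent_par_of_IOTS hd hiS hiE hℓy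
    exact δ_mem_outSet_after_par hσ.1 (hS' hq₁) (hE' hq₂)
  | act a =>
    rcases act_mem_out_or_of_mem_par_out hℓy with h | h
    · exact hma.act_mem_outSet_after_par_of_fst hc hσ (hS' h)
    · exact hma.act_mem_outSet_after_par_of_snd hc hσ (hE' h)

end Acceptance

end LTS

theorem counterexample_proj_general {S E SI EI A : Type}
    (s : LTS S A) (e : LTS E A) (iS : LTS SI A) (iE : LTS EI A)
    (hc : LTS.Composable s e) (hma : s.MutuallyAccepts e)
    (his : iS.IOTS) (hie : iE.IOTS)
    (hIs : iS.I = s.I) (hUs : iS.U = s.U) (hIe : iE.I = e.I) (hUe : iE.U = e.U)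
    (σ : List (DLabel A))
    (hcex : LTS.Counterexample σ (iS.par iE) (s.par e)) :
    LTS.Counterexample (LTS.proj σ s.Ld) iS s ∨
      LTS.Counterexample (LTS.proj σ e.Ld) iE e := by
  have hσ := hcex.1
  have hUtS := hma.proj_mem_Utraces hc hσ
  have hUtE := hma.symm.proj_mem_Utraces hc.symm (LTS.par_Utraces_swap hσ)
  by_contra h
  refine hcex.2 (hma.outSet_after_par_subset hc hσ (by rw [hUs, hUe]; exact hc) his hie
    (by simp only [LTS.Ld, LTS.L, hIs, hUs]) (by simp only [LTS.Ld, LTS.L, hIe, hUe])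
    ?_ ?_)
  · exact not_not.mp fun h' => h (.inl ⟨hUtS, h'⟩)
  · exact not_not.mp fun h' => h (.inr ⟨hUtE, h'⟩)

/-- diagnosis by projection: a counterexample for the composed
system projects to a counterexample for one of the components. -/
theorem counterexample_proj {S E SI EI A : Type}
    (s : LTS S A) (e : LTS E A) (iS : LTS SI A) (iE : LTS EI A)
    (hs : s.WF) (he : e.WF) (hiswf : iS.WF) (hiewf : iE.WF)
    (hc : LTS.Composable s e) (hma : s.MutuallyAccepts e)
    (his : iS.IOTS) (hie : iE.IOTS)
    (hIs : iS.I = s.I) (hUs : iS.U = s.U) (hIe : iE.I = e.I) (hUe : iE.U = e.U)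
    (σ : List (DLabel A)) (hσ : σ ∈ (s.par e).Utraces)
    (hcex : LTS.Counterexample σ (iS.par iE) (s.par e)) :
    LTS.Counterexample (LTS.proj σ s.Ld) iS s ∨
      LTS.Counterexample (LTS.proj σ e.Ld) iE e :=
  counterexample_proj_general s e iS iE hc hma his hie hIs hUs hIe hUe σ hcex
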